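/- Let S and T be orders with S non-zero, let R = S × T, let π: R → S be the natural projection, and let (A,G) ∈ GpRg(R). Then (π(A), π(G)) ∈ GpRg(S), and π restricts to a group isomorphism from G onto π(G). -/

import Mathlib

/-- The natural ring homomorphism `A[G] → R` for a subring `A ⊆ R` and a subgroup `G ⊆ Rˣ`. -/
noncomputable def gpRgHom {R : Type*} [CommRing R] (A : Subring R) (G : Subgroup Rˣ) :
    MonoidAlgebra A G →+* R :=
  MonoidAlgebra.liftNCRingHom A.subtype ((Units.coeHom R).comp G.subtype)
    (fun _ _ => Commute.all _ _)

/-- `A[G] = R`: the natural map `A[G] → R` is a ring isomorphism. -/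
def IsGpRg {R : Type*} [CommRing R] (A : Subring R) (G : Subgroup Rˣ) : Prop :=
  Function.Bijective (gpRgHom A G)

/-!
The idempotent `(0, 1)` of `S × T` lies in `A`. Indeed `G` is finite, being a `ℤ`-linearly
independent subset of an order, and over an order every idempotent of the group ring of a finite
abelian group is constant: modulo `p` the Frobenius pushes it into the group ring of the
`p'`-part of `G`, and no nonzero element of an order is divisible by every power of `p`.
With `e = (0, 1) ∈ A`, the kernel of the projection is `{r | e r = r}`, and pulled back along
the injective map `A[G] → S × T` the relation `e x = x` holds coefficientwise; this gives the
injectivity both of `π(A)[π(G)] → S` and of `π` on `G`.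
-/

open MonoidAlgebra

theorem natCast_dvd_sum_pow_prime_pow_sub {R ι : Type*} [CommRing R] {p : ℕ} (hp : p.Prime)
    (s : Finset ι) (a : ι → R) (n : ℕ) :
    (p : R) ∣ (∑ i ∈ s, a i) ^ p ^ n - ∑ i ∈ s, a i ^ p ^ n := by
  classical
  induction s using Finset.induction_on with
  | empty => simp [zero_pow (pow_ne_zero n hp.ne_zero)]
  | insert i s hi ih =>
    obtain ⟨r, hr⟩ := exists_add_pow_prime_pow_eq hp (a i) (∑ j ∈ s, a j) n
    rw [Finset.sum_insert hi, Finset.sum_insert hi, hr]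
    convert ih.add (dvd_mul_right (p : R) (a i * (∑ j ∈ s, a j) * r)) using 1
    ring

theorem eq_zero_of_forall_natCast_pow_dvd {R : Type*} [CommRing R] [Module.Finite ℤ R]
    [Module.IsTorsionFree ℤ R] {p : ℕ} (hp : p.Prime) {x : R} (hx : ∀ k, (p : R) ^ k ∣ x) :
    x = 0 := by
  have hI : Ideal.span {(p : ℤ)} ≠ ⊤ := by
    rw [Ne, Ideal.span_singleton_eq_top]
    exact (Nat.prime_iff_prime_int.mp hp).not_isUnit
  have hmem : x ∈ ⨅ k : ℕ, Ideal.span {(p : ℤ)} ^ k • (⊤ : Submodule ℤ R) := by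
    refine Submodule.mem_iInf _ |>.mpr fun k => ?_
    obtain ⟨y, rfl⟩ := hx k
    rw [show (p : R) ^ k * y = ((p : ℤ) ^ k) • y by simp [zsmul_eq_mul]]
    exact Submodule.smul_mem_smul (Ideal.pow_mem_pow (Ideal.mem_span_singleton_self _) k) trivial
  rwa [Ideal.iInf_pow_smul_eq_bot_of_isTorsionFree (M := R) _ hI, Submodule.mem_bot] at hmem

namespace MonoidAlgebra

variable {A G : Type*} [CommRing A]

theorem natCast_dvd_coeff [Monoid G] {n : ℕ} {x : A[G]} (h : (n : A[G]) ∣ x) (g : G) :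
    (n : A) ∣ x.coeff g := by
  obtain ⟨z, rfl⟩ := h
  rw [natCast_def, coeff_single_one_mul]
  exact dvd_mul_right _ _

theorem coeff_eq_zero_of_mem_range_mapDomainRingHom [Monoid G] {H : Submonoid G} {x : A[G]}
    (hx : x ∈ (mapDomainRingHom A H.subtype).range) {g : G} (hg : g ∉ H) : x.coeff g = 0 := by
  obtain ⟨y, rfl⟩ := hx
  simpa using Finsupp.mapDomain_of_notMem_range y.coeff g (by simpa using hg)

theorem natCast_dvd_pow_prime_pow_sub [CommMonoid G] {p : ℕ} (hp : p.Prime) (f : A[G]) (n : ℕ) :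
    (p : A[G]) ∣ f ^ p ^ n - ∑ g ∈ f.coeff.support, single (g ^ p ^ n) (f.coeff g ^ p ^ n) := by
  have hsum : ∑ g ∈ f.coeff.support, single g (f.coeff g) = f := sum_coeff_single f
  simpa only [single_pow, hsum] using
    natCast_dvd_sum_pow_prime_pow_sub hp f.coeff.support (fun g => single g (f.coeff g)) n

/-- Frobenius modulo `p` sends an idempotent `f` into the group ring of the `p'`-part `H` of `G`;
lifting the congruence, `f ≡ F ^ p ^ k` modulo `p ^ (k + 1)` with `F` supported on `H`, so the
coefficients of `f` outside `H` are divisible by every power of `p`. -/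
theorem coeff_eq_zero_of_isIdempotentElem [CommGroup G] [Finite G]
    (hA : ∀ p : ℕ, p.Prime → ∀ x : A, (∀ k, (p : A) ^ k ∣ x) → x = 0)
    {f : A[G]} (hf : IsIdempotentElem f) {h : G} (hh : h ≠ 1) : f.coeff h = 0 := by
  obtain ⟨p, hp, hph⟩ := Nat.exists_prime_and_dvd (mt orderOf_eq_one_iff.mp hh)
  set N := ordCompl[p] (Nat.card G)
  set q := p ^ (Nat.card G).factorization p
  let H := (powMonoidHom N : G →* G).ker
  have hqH (g : G) : g ^ q ∈ H := by
    simp [H, N, q, ← pow_mul, Nat.ordProj_mul_ordCompl_eq_self, pow_card_eq_one']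
  have hhH : h ∉ H := fun hH =>
    Nat.not_dvd_ordCompl hp Nat.card_pos.ne' (hph.trans (orderOf_dvd_of_pow_eq_one hH))
  set F := ∑ g ∈ f.coeff.support, single (g ^ q) (f.coeff g ^ q)
  have hF : F ∈ (mapDomainRingHom A H.toSubmonoid.subtype).range :=
    Subring.sum_mem _ fun g _ => ⟨single ⟨g ^ q, hqH g⟩ (f.coeff g ^ q), by simp⟩
  have hfF : (p : A[G]) ∣ f - F := by
    simpa only [hf.pow_eq (pow_ne_zero _ hp.ne_zero)] using natCast_dvd_pow_prime_pow_sub hp f _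
  refine hA p hp _ fun k => (pow_dvd_pow _ k.le_succ).trans ?_
  have hk := dvd_sub_pow_of_dvd_sub hfF k
  rw [hf.pow_eq (pow_ne_zero _ hp.ne_zero), ← Nat.cast_pow] at hk
  simpa [coeff_eq_zero_of_mem_range_mapDomainRingHom (pow_mem hF _) hhH] using
    natCast_dvd_coeff hk h

end MonoidAlgebra

section GroupRing

variable {R : Type*} [CommRing R] {A : Subring R} {G : Subgroup Rˣ}

@[simp]
theorem gpRgHom_single (g : G) (a : A) :
    gpRgHom A G (single g a) = (a : R) * ((g : Rˣ) : R) := by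
  simp [gpRgHom]

namespace IsGpRg

theorem linearIndependent [Module.IsTorsionFree ℤ R] [Nontrivial R] (hAG : IsGpRg A G) :
    LinearIndependent ℤ fun g : G => ((g : Rˣ) : R) := by
  have hZ : Function.Injective fun n : ℤ => n • (1 : A) := fun m n hmn => by
    have hmn' : (m - n) • (1 : R) = 0 := by
      rw [sub_smul, sub_eq_zero]
      simpa using congrArg ((↑) : A → R) hmn
    exact sub_eq_zero.mp ((smul_eq_zero.mp hmn').resolve_right one_ne_zero)
  have hsingle := ((MonoidAlgebra.basis G A).linearIndependent.restrict_scalars hZ).map'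
    (gpRgHom A G).toAddMonoidHom.toIntLinearMap (LinearMap.ker_eq_bot.mpr hAG.1)
  have hcomp : ⇑(gpRgHom A G).toAddMonoidHom.toIntLinearMap ∘ ⇑(basis G A) =
      fun g : G => ((g : Rˣ) : R) := by
    ext g
    simp
  rwa [hcomp] at hsingle

theorem finite [Module.Finite ℤ R] [Module.IsTorsionFree ℤ R] [Nontrivial R]
    (hAG : IsGpRg A G) : Finite G :=
  hAG.linearIndependent.finite_of_isNoetherian

theorem mem_of_isIdempotentElem [Module.Finite ℤ R] [Module.IsTorsionFree ℤ R] [Nontrivial R]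
    (hAG : IsGpRg A G) {e : R} (he : IsIdempotentElem e) : e ∈ A := by
  have : Finite G := hAG.finite
  obtain ⟨f, rfl⟩ := hAG.2 e
  have hf : IsIdempotentElem f := hAG.1 (by rw [map_mul]; exact he)
  have hA (p : ℕ) (hp : p.Prime) (x : A) (hx : ∀ k, (p : A) ^ k ∣ x) : x = 0 :=
    Subtype.ext <| eq_zero_of_forall_natCast_pow_dvd hp fun k => by
      simpa using map_dvd A.subtype (hx k)
  have hf1 : f = single 1 (f.coeff 1) := by
    ext g
    rcases eq_or_ne g 1 with rfl | hg
    · simp [coeff_single]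
    · simp [coeff_single, Ne.symm hg, coeff_eq_zero_of_isIdempotentElem hA hf hg]
  rw [hf1, gpRgHom_single]
  simp

theorem coeff_mul_eq_of_mul_eq (hAG : IsGpRg A G) {c : A} {x : MonoidAlgebra A G}
    (hx : (c : R) * gpRgHom A G x = gpRgHom A G x) (g : G) : c * x.coeff g = x.coeff g := by
  have hcx : single 1 c * x = x := hAG.1 (by simpa using hx)
  rw [← coeff_single_one_mul, hcx]

end IsGpRg

end GroupRing

def RingHom.subringMap {R S : Type*} [Ring R] [Ring S] (f : R →+* S) (A : Subring R) :
    A →+* A.map f :=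
  f.restrict A (A.map f) fun x hx => ⟨x, hx, rfl⟩

@[simp]
theorem RingHom.coe_subringMap_apply {R S : Type*} [Ring R] [Ring S] (f : R →+* S)
    (A : Subring R) (a : A) : (f.subringMap A a : S) = f a :=
  rfl

theorem RingHom.subringMap_surjective {R S : Type*} [Ring R] [Ring S] (f : R →+* S)
    (A : Subring R) : Function.Surjective (f.subringMap A) :=
  fun ⟨_, a, ha, hfa⟩ => ⟨⟨a, ha⟩, Subtype.ext hfa⟩

section Map

variable {R S : Type*} [CommRing R] [CommRing S] (f : R →+* S) (A : Subring R) (G : Subgroup Rˣ)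

noncomputable def gpRgMap :
    MonoidAlgebra A G →+* MonoidAlgebra (A.map f) (G.map (Units.map f.toMonoidHom)) :=
  (mapDomainRingHom _ ((Units.map f.toMonoidHom).subgroupMap G)).comp
    (mapRingHom G (f.subringMap A))

theorem gpRgMap_single (g : G) (a : A) :
    gpRgMap f A G (single g a) =
      single ((Units.map f.toMonoidHom).subgroupMap G g) (f.subringMap A a) := by
  rw [gpRgMap, RingHom.comp_apply, mapRingHom_single, mapDomainRingHom_apply, mapDomain_single]

theorem gpRgHom_gpRgMap (x : MonoidAlgebra A G) :
    gpRgHom (A.map f) (G.map (Units.map f.toMonoidHom)) (gpRgMap f A G x) =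
      f (gpRgHom A G x) := by
  induction x using MonoidAlgebra.induction_linear with
  | zero => rw [map_zero, map_zero, map_zero, map_zero]
  | add x y hx hy => rw [map_add, map_add, hx, hy, map_add, map_add]
  | single g a => rw [gpRgMap_single, gpRgHom_single, gpRgHom_single, map_mul]; rfl

theorem gpRgMap_surjective : Function.Surjective (gpRgMap f A G) := by
  intro y
  obtain ⟨z, hz⟩ := Finsupp.mapDomain_surjective
    ((Units.map f.toMonoidHom).subgroupMap_surjective G) y.coeff
  obtain ⟨x, hx⟩ := map_surjective (M := G) (f.subringMap A).toAddMonoidHom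
    (f.subringMap_surjective A) (ofCoeff z)
  refine ⟨x, ?_⟩
  rw [gpRgMap, RingHom.comp_apply, coe_mapRingHom, ← RingHom.toAddMonoidHom_eq_coe, hx,
    mapDomainRingHom_apply]
  ext g
  simpa using DFunLike.congr_fun hz g

theorem gpRgMap_eq_zero {x : MonoidAlgebra A G} (hx : ∀ g, f (x.coeff g) = 0) :
    gpRgMap f A G x = 0 := by
  have hmap : mapRingHom G (f.subringMap A) x = 0 := by
    ext g
    simpa [coeff_mapRingHom, Subtype.ext_iff] using hx g
  rw [gpRgMap, RingHom.comp_apply, hmap, map_zero]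

end Map

namespace IsGpRg

variable {R S : Type*} [CommRing R] [CommRing S] {f : R →+* S} {A : Subring R} {G : Subgroup Rˣ}

theorem map (hAG : IsGpRg A G) (hf : Function.Surjective f) {e : A}
    (he : ∀ r, f r = 0 ↔ (e : R) * r = r) :
    IsGpRg (A.map f) (G.map (Units.map f.toMonoidHom)) := by
  refine ⟨(injective_iff_map_eq_zero _).mpr fun y hy => ?_, fun s => ?_⟩
  · obtain ⟨x, rfl⟩ := gpRgMap_surjective f A G y
    rw [gpRgHom_gpRgMap, he] at hy
    exact gpRgMap_eq_zero f A G fun g =>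
      (he _).mpr (congrArg ((↑) : A → R) (hAG.coeff_mul_eq_of_mul_eq hy g))
  · obtain ⟨r, rfl⟩ := hf s
    obtain ⟨x, rfl⟩ := hAG.2 r
    exact ⟨gpRgMap f A G x, gpRgHom_gpRgMap f A G x⟩

theorem injOn_unitsMap [Nontrivial S] (hAG : IsGpRg A G) {e : A}
    (he : ∀ r, f r = 0 ↔ (e : R) * r = r) : Set.InjOn (Units.map f.toMonoidHom) G := by
  intro u hu v hv huv
  by_contra hne
  set x : MonoidAlgebra A G := single ⟨u, hu⟩ 1 - single ⟨v, hv⟩ 1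
  have hx : (e : R) * gpRgHom A G x = gpRgHom A G x := by
    rw [← he]
    simpa [x, sub_eq_zero] using congrArg ((↑) : Sˣ → S) huv
  have he1 : e = 1 := by
    simpa [x, coeff_single, Finsupp.single_apply, hne] using hAG.coeff_mul_eq_of_mul_eq hx ⟨u, hu⟩
  exact one_ne_zero (map_one f ▸ (he 1).mpr (by simp [he1]))

end IsGpRg

/-- Let `S` and `T` be orders with `S` non-zero, `R = S × T`, and
`π : R → S` the projection. If `(A,G) ∈ GpRg(R)`, then `(π(A), π(G)) ∈ GpRg(S)` and `π`
restricts to a group isomorphism from `G` onto `π(G)`. -/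
theorem gpRg_projection
    {S : Type u} [CommRing S] [Nontrivial S] [Module.Free ℤ S] [Module.Finite ℤ S]
    {T : Type v} [CommRing T] [Module.Free ℤ T] [Module.Finite ℤ T]
    (A : Subring (S × T)) (G : Subgroup (S × T)ˣ) (hAG : IsGpRg A G) :
    IsGpRg (A.map (RingHom.fst S T))
        (G.map (Units.map (RingHom.fst S T).toMonoidHom)) ∧
      Set.InjOn (Units.map (RingHom.fst S T).toMonoidHom) G := by
  have hidem : IsIdempotentElem ((0, 1) : S × T) := by simp [IsIdempotentElem]
  set e : A := ⟨(0, 1), hAG.mem_of_isIdempotentElem hidem⟩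
  have hker (r : S × T) : RingHom.fst S T r = 0 ↔ (e : S × T) * r = r := by
    simp [e, Prod.ext_iff, eq_comm]
  exact ⟨hAG.map Prod.fst_surjective hker, hAG.injOn_unitsMap hker⟩
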